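/- The cost function decomposes over islands: for any distribution p on X, C(p) = Σ_{c ∈ L(G)} p(c) · C(p^c), where p(c) is the probability mass in island c and p^c is the conditional distribution of p within island c. -/
import Mathlib

open Finset Real

def isDist {X : Type*} [Fintype X] (p : X → ℝ) : Prop :=
  (∀ x, 0 ≤ p x) ∧ ∑ x, p x = 1

def isStoch {X : Type*} [Fintype X] (G : X → X → ℝ) : Prop :=
  (∀ y x, 0 ≤ G y x) ∧ ∀ x, ∑ y, G y x = 1

def push {X : Type*} [Fintype X] (G : X → X → ℝ) (p : X → ℝ) : X → ℝ :=
  fun y => ∑ x, G y x * p x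

noncomputable def KL {X : Type*} [Fintype X] (p q : X → ℝ) : ℝ :=
  ∑ x, p x * Real.log (p x / q x)

noncomputable def Ent {X : Type*} [Fintype X] (p : X → ℝ) : ℝ :=
  -∑ x, p x * Real.log (p x)

noncomputable def cost {X : Type*} [Fintype X] (G : X → X → ℝ) (f : X → ℝ) (p : X → ℝ) : ℝ :=
  Ent (push G p) - Ent p + ∑ x, p x * f x

open scoped Classical

def islandRel {X : Type*} [Fintype X] (G : X → X → ℝ) : X → X → Prop :=
  fun a b => ∃ y, 0 < G y a ∧ 0 < G y b

def islandSetoid {X : Type*} [Fintype X] (G : X → X → ℝ) : Setoid X :=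
  Relation.EqvGen.setoid (islandRel G)

noncomputable def islandMass {X : Type*} [Fintype X] (G : X → X → ℝ) (p : X → ℝ)
    (c : Quotient (islandSetoid G)) : ℝ :=
  ∑ x ∈ Finset.univ.filter (fun x => Quotient.mk (islandSetoid G) x = c), p x

noncomputable def islandCond {X : Type*} [Fintype X] (G : X → X → ℝ) (p : X → ℝ)
    (c : Quotient (islandSetoid G)) : X → ℝ :=
  fun x => if Quotient.mk (islandSetoid G) x = c then p x / islandMass G p c else 0

section Aux

variable {X : Type*} [Fintype X]

private lemma sum_mul_log_of_disjoint {ι : Type*} [Fintype ι] (a : ι → ℝ)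
    (h : ∀ i j, a i ≠ 0 → a j ≠ 0 → i = j) :
    (∑ i, a i) * Real.log (∑ i, a i) = ∑ i, a i * Real.log (a i) := by
  have key : ∀ j ∈ Finset.univ, a j * Real.log (a j) = a j * Real.log (∑ i, a i) := by
    intro j _
    by_cases hj : a j = 0
    · simp [hj]
    · have hs : ∑ i, a i = a j := by
        apply Finset.sum_eq_single
        · intro b _ hb
          by_contra hb0
          exact hb (h b j hb0 hj)
        · intro hju; exact absurd (Finset.mem_univ j) hju
      rw [hs]
  rw [Finset.sum_congr rfl key, ← Finset.sum_mul]

private lemma ent_decomp {ι : Type*} [Fintype ι] (m : ι → ℝ) (q : ι → X → ℝ)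
    (hq : ∀ c y, 0 ≤ q c y)
    (hdisj : ∀ y c c', q c y ≠ 0 → q c' y ≠ 0 → c = c')
    (hsum : ∀ c, m c ≠ 0 → ∑ y, q c y = 1) :
    Ent (fun y => ∑ c, m c * q c y)
      = ∑ c, m c * Ent (q c) - ∑ c, m c * Real.log (m c) := by
  have hE : Ent (fun y => ∑ c, m c * q c y)
      = -∑ y, (∑ c, m c * q c y) * Real.log (∑ c, m c * q c y) := rfl
  rw [hE]
  have step1 : ∀ y ∈ Finset.univ, (∑ c, m c * q c y) * Real.log (∑ c, m c * q c y)
      = ∑ c, (m c * q c y) * Real.log (m c * q c y) := by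
    intro y _
    exact sum_mul_log_of_disjoint (fun c => m c * q c y)
      (fun i j hi hj => hdisj y i j (mul_ne_zero_iff.mp hi).2 (mul_ne_zero_iff.mp hj).2)
  have step3 : ∀ c ∈ Finset.univ, ∑ y, (m c * q c y) * Real.log (m c * q c y)
      = m c * Real.log (m c) - m c * Ent (q c) := by
    intro c _
    by_cases hmc : m c = 0
    · simp [hmc]
    · have hpt : ∀ y ∈ Finset.univ, (m c * q c y) * Real.log (m c * q c y)
          = m c * (q c y * Real.log (q c y)) + (m c * Real.log (m c)) * q c y := by
        intro y _
        by_cases hy : q c y = 0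
        · simp [hy]
        · rw [Real.log_mul hmc hy]; ring
      rw [Finset.sum_congr rfl hpt, Finset.sum_add_distrib,
        ← Finset.mul_sum, ← Finset.mul_sum, hsum c hmc, mul_one]
      simp only [Ent]
      ring
  have : (∑ y, (∑ c, m c * q c y) * Real.log (∑ c, m c * q c y))
       = ∑ c, (m c * Real.log (m c) - m c * Ent (q c)) := by
    rw [Finset.sum_congr rfl step1, Finset.sum_comm]
    exact Finset.sum_congr rfl step3
  rw [this, Finset.sum_sub_distrib]
  ring

variable (G : X → X → ℝ) (p : X → ℝ)

private lemma cond_nonneg (hp0 : ∀ x, 0 ≤ p x) (c : Quotient (islandSetoid G)) (x : X) :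
    0 ≤ islandCond G p c x := by
  unfold islandCond
  split
  · exact div_nonneg (hp0 x) (Finset.sum_nonneg fun i _ => hp0 i)
  · exact le_refl 0

private lemma p_zero_of_mass_zero (hp0 : ∀ x, 0 ≤ p x) {c : Quotient (islandSetoid G)}
    (hc : islandMass G p c = 0) {x : X} (hx : Quotient.mk (islandSetoid G) x = c) : p x = 0 := by
  have := (Finset.sum_eq_zero_iff_of_nonneg (fun i _ => hp0 i)).mp hc
  exact this x (Finset.mem_filter.mpr ⟨Finset.mem_univ x, hx⟩)

private lemma mass_mul_cond (hp0 : ∀ x, 0 ≤ p x) (c : Quotient (islandSetoid G)) (x : X) :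
    islandMass G p c * islandCond G p c x
      = if Quotient.mk (islandSetoid G) x = c then p x else 0 := by
  unfold islandCond
  by_cases hx : Quotient.mk (islandSetoid G) x = c
  · simp only [hx, if_true]
    by_cases hm : islandMass G p c = 0
    · rw [hm, zero_mul, p_zero_of_mass_zero G p hp0 hm hx]
    · field_simp
  · simp [hx]

private lemma p_eq_sum (hp0 : ∀ x, 0 ≤ p x) (x : X) :
    p x = ∑ c : Quotient (islandSetoid G), islandMass G p c * islandCond G p c x := by
  rw [Finset.sum_congr rfl (fun c _ => mass_mul_cond G p hp0 c x)]
  simp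

private lemma cond_sum_one (c : Quotient (islandSetoid G)) (hm : islandMass G p c ≠ 0) :
    ∑ x, islandCond G p c x = 1 := by
  have h : ∑ x, islandCond G p c x
      = (∑ x ∈ Finset.univ.filter (fun x => Quotient.mk (islandSetoid G) x = c), p x)
        / islandMass G p c := by
    rw [Finset.sum_div, Finset.sum_filter]
    apply Finset.sum_congr rfl
    intro x _
    unfold islandCond
    split_ifs <;> rfl
  rw [h]
  exact div_self hm

private lemma cond_eq_zero (c : Quotient (islandSetoid G)) (x : X)
    (h : Quotient.mk (islandSetoid G) x ≠ c) : islandCond G p c x = 0 := by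
  unfold islandCond; rw [if_neg h]

private lemma cond_disjoint (x : X) (c c' : Quotient (islandSetoid G))
    (h : islandCond G p c x ≠ 0) (h' : islandCond G p c' x ≠ 0) : c = c' := by
  have h1 : Quotient.mk (islandSetoid G) x = c := by
    by_contra hc; exact h (cond_eq_zero G p c x hc)
  have h2 : Quotient.mk (islandSetoid G) x = c' := by
    by_contra hc; exact h' (cond_eq_zero G p c' x hc)
  rw [← h1, ← h2]

private lemma push_nonneg (hG : isStoch G) (q : X → ℝ) (hq : ∀ x, 0 ≤ q x) (y : X) :
    0 ≤ push G q y :=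
  Finset.sum_nonneg fun x _ => mul_nonneg (hG.1 y x) (hq x)

private lemma push_sum (hG : isStoch G) (q : X → ℝ) : ∑ y, push G q y = ∑ x, q x := by
  unfold push
  rw [Finset.sum_comm]
  apply Finset.sum_congr rfl
  intro x _
  rw [← Finset.sum_mul, hG.2 x, one_mul]

private lemma push_cond_support (hG : isStoch G) (c : Quotient (islandSetoid G)) (y : X)
    (h : push G (islandCond G p c) y ≠ 0) :
    ∃ x, Quotient.mk (islandSetoid G) x = c ∧ 0 < G y x := by
  unfold push at h
  obtain ⟨x, -, hx⟩ := Finset.exists_ne_zero_of_sum_ne_zero h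
  have h1 : G y x ≠ 0 := (mul_ne_zero_iff.mp hx).1
  have h2 : islandCond G p c x ≠ 0 := (mul_ne_zero_iff.mp hx).2
  have hxc : Quotient.mk (islandSetoid G) x = c := by
    by_contra hc; exact h2 (cond_eq_zero G p c x hc)
  exact ⟨x, hxc, lt_of_le_of_ne (hG.1 y x) (Ne.symm h1)⟩

private lemma push_cond_disjoint (hG : isStoch G) (y : X) (c c' : Quotient (islandSetoid G))
    (h : push G (islandCond G p c) y ≠ 0) (h' : push G (islandCond G p c') y ≠ 0) : c = c' := by
  obtain ⟨x, hxc, hx⟩ := push_cond_support G p hG c y h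
  obtain ⟨x', hxc', hx'⟩ := push_cond_support G p hG c' y h'
  rw [← hxc, ← hxc']
  exact Quotient.sound (Relation.EqvGen.rel x x' ⟨y, hx, hx'⟩)

private lemma push_eq_sum (hp0 : ∀ x, 0 ≤ p x) (y : X) :
    push G p y = ∑ c : Quotient (islandSetoid G),
      islandMass G p c * push G (islandCond G p c) y := by
  unfold push
  rw [Finset.sum_congr rfl (fun x _ => by rw [p_eq_sum G p hp0 x, Finset.mul_sum]),
    Finset.sum_comm]
  apply Finset.sum_congr rfl
  intro c _
  rw [Finset.mul_sum]
  apply Finset.sum_congr rfl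
  intro x _
  ring

end Aux

/-- the cost decomposes over islands:
`C(p) = Σ_c p(c) · C(p^c)`. -/
theorem cost_island_decomposition {X : Type*} [Fintype X]
    (G : X → X → ℝ) (f : X → ℝ) (hG : isStoch G)
    (p : X → ℝ) (hp : isDist p) :
    cost G f p =
      ∑ c : Quotient (islandSetoid G), islandMass G p c * cost G f (islandCond G p c) := by
  obtain ⟨hp0, hp1⟩ := hp
  have hEntp : Ent p = (∑ c : Quotient (islandSetoid G),
        islandMass G p c * Ent (islandCond G p c))
      - ∑ c : Quotient (islandSetoid G),
        islandMass G p c * Real.log (islandMass G p c) := by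
    have h := ent_decomp (islandMass G p) (islandCond G p)
      (fun c y => cond_nonneg G p hp0 c y)
      (fun y c c' => cond_disjoint G p y c c')
      (fun c hc => cond_sum_one G p c hc)
    rw [← h]
    congr 1
    funext x
    exact p_eq_sum G p hp0 x
  have hEntq : Ent (push G p) = (∑ c : Quotient (islandSetoid G),
        islandMass G p c * Ent (push G (islandCond G p c)))
      - ∑ c : Quotient (islandSetoid G),
        islandMass G p c * Real.log (islandMass G p c) := by
    have h := ent_decomp (islandMass G p) (fun c => push G (islandCond G p c))
      (fun c y => push_nonneg G hG _ (cond_nonneg G p hp0 c) y)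
      (fun y c c' => push_cond_disjoint G p hG y c c')
      (fun c hc => by rw [push_sum G hG]; exact cond_sum_one G p c hc)
    rw [← h]
    congr 1
    funext y
    exact push_eq_sum G p hp0 y
  have hlin : ∑ x, p x * f x = ∑ c : Quotient (islandSetoid G),
      islandMass G p c * ∑ x, islandCond G p c x * f x := by
    rw [Finset.sum_congr rfl (fun x _ => by rw [p_eq_sum G p hp0 x, Finset.sum_mul]),
      Finset.sum_comm]
    apply Finset.sum_congr rfl
    intro c _
    rw [Finset.mul_sum]
    apply Finset.sum_congr rfl
    intro x _
    ring
  unfold cost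
  rw [hEntq, hEntp, hlin]
  have hsplit : ∀ c ∈ (Finset.univ : Finset (Quotient (islandSetoid G))),
      islandMass G p c * (Ent (push G (islandCond G p c)) - Ent (islandCond G p c)
        + ∑ x, islandCond G p c x * f x)
      = islandMass G p c * Ent (push G (islandCond G p c))
        - islandMass G p c * Ent (islandCond G p c)
        + islandMass G p c * ∑ x, islandCond G p c x * f x := fun c _ => by ring
  rw [Finset.sum_congr rfl hsplit, Finset.sum_add_distrib, Finset.sum_sub_distrib]
  ring
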